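/- arXiv:2503.12409 — 2 statements merged into one kernel-verified Lean document; each statement's English description precedes it below -/
import Mathlib

section
/- Let a and ω be octonions such that a * ω = ω * conj(a). Then for every octonion b, a * (ω * b) = ω * (conj(a) * b). -/
/-- The octonions, constructed from the quaternions by the Cayley–Dickson doubling. -/
@[ext] structure Octonion : Type where
  q1 : Quaternion ℝ
  q2 : Quaternion ℝ

namespace Octonion

noncomputable instance : Zero Octonion := ⟨⟨0, 0⟩⟩
noncomputable instance : One Octonion := ⟨⟨1, 0⟩⟩
noncomputable instance : Add Octonion := ⟨fun x y => ⟨x.q1 + y.q1, x.q2 + y.q2⟩⟩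
noncomputable instance : Neg Octonion := ⟨fun x => ⟨-x.q1, -x.q2⟩⟩
noncomputable instance : Sub Octonion := ⟨fun x y => ⟨x.q1 - y.q1, x.q2 - y.q2⟩⟩

/-- Cayley–Dickson multiplication: `(a,b)(c,d) = (ac - d*b, da + bc*)`. -/
noncomputable instance : Mul Octonion :=
  ⟨fun x y => ⟨x.q1 * y.q1 - star y.q2 * x.q2, y.q2 * x.q1 + x.q2 * star y.q1⟩⟩

noncomputable instance : SMul ℝ Octonion := ⟨fun r x => ⟨r • x.q1, r • x.q2⟩⟩

/-- Octonionic conjugation. -/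
noncomputable def conj (x : Octonion) : Octonion := ⟨star x.q1, -x.q2⟩

/-- The real part of an octonion. -/
noncomputable def re (x : Octonion) : ℝ := x.q1.re

/-- The real octonion corresponding to `r : ℝ`. -/
noncomputable def ofReal (r : ℝ) : Octonion := ⟨(r : Quaternion ℝ), 0⟩

/-- The imaginary part of an octonion. -/
noncomputable def im (x : Octonion) : Octonion := ⟨x.q1 - ((x.q1.re : ℝ) : Quaternion ℝ), x.q2⟩

/-- The Euclidean norm of an octonion (the standard norm of `ℝ⁸`). -/
noncomputable def norm (x : Octonion) : ℝ :=
  Real.sqrt (Quaternion.normSq x.q1 + Quaternion.normSq x.q2)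

/-- The standard real inner product on `𝕆 ≅ ℝ⁸`. -/
noncomputable def inner (x y : Octonion) : ℝ := re (x * conj y)

/-- Powers of an octonion (octonions are power-associative). -/
noncomputable def pow (x : Octonion) : ℕ → Octonion
  | 0 => 1
  | n + 1 => pow x n * x

/-- The associator of three octonions. -/
noncomputable def assoc (a b c : Octonion) : Octonion := (a * b) * c - a * (b * c)

end Octonion

/-! The octonion associator is additive in each argument, vanishes when an argument is real, and
is alternating because the octonions are alternative. As `conj a = 2 re a - a`, this gives
`[ω, conj a, b] = -[ω, a, b] = [a, ω, b]`; expanding both associators and rewriting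
`a * ω = ω * conj a` cancels the common term `(ω * conj a) * b`. -/

namespace Octonion

@[simp] lemma add_q1 (x y : Octonion) : (x + y).q1 = x.q1 + y.q1 := rfl
@[simp] lemma add_q2 (x y : Octonion) : (x + y).q2 = x.q2 + y.q2 := rfl
@[simp] lemma zero_q1 : (0 : Octonion).q1 = 0 := rfl
@[simp] lemma zero_q2 : (0 : Octonion).q2 = 0 := rfl
@[simp] lemma neg_q1 (x : Octonion) : (-x).q1 = -x.q1 := rfl
@[simp] lemma neg_q2 (x : Octonion) : (-x).q2 = -x.q2 := rfl
@[simp] lemma sub_q1 (x y : Octonion) : (x - y).q1 = x.q1 - y.q1 := rfl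
@[simp] lemma sub_q2 (x y : Octonion) : (x - y).q2 = x.q2 - y.q2 := rfl
@[simp] lemma mul_q1 (x y : Octonion) : (x * y).q1 = x.q1 * y.q1 - star y.q2 * x.q2 := rfl
@[simp] lemma mul_q2 (x y : Octonion) : (x * y).q2 = y.q2 * x.q1 + x.q2 * star y.q1 := rfl
@[simp] lemma conj_q1 (x : Octonion) : (conj x).q1 = star x.q1 := rfl
@[simp] lemma conj_q2 (x : Octonion) : (conj x).q2 = -x.q2 := rfl
@[simp] lemma ofReal_q1 (r : ℝ) : (ofReal r).q1 = r := rfl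
@[simp] lemma ofReal_q2 (r : ℝ) : (ofReal r).q2 = 0 := rfl

noncomputable instance : AddCommGroup Octonion where
  add_assoc x y z := by ext <;> simp [add_assoc]
  zero_add x := by ext <;> simp
  add_zero x := by ext <;> simp
  neg_add_cancel x := by ext <;> simp
  add_comm x y := by ext <;> simp [add_comm]
  sub_eq_add_neg x y := by ext <;> simp [sub_eq_add_neg]
  nsmul := nsmulRec
  zsmul := zsmulRec

noncomputable instance : NonUnitalNonAssocRing Octonion where
  left_distrib x y z := by ext <;> simp [mul_add, add_mul] <;> abel
  right_distrib x y z := by ext <;> simp [mul_add, add_mul] <;> abel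
  zero_mul x := by ext <;> simp
  mul_zero x := by ext <;> simp

lemma assoc_add_left (x y z w : Octonion) : assoc (x + y) z w = assoc x z w + assoc y z w := by
  simp only [assoc, add_mul]; abel

lemma assoc_add_middle (x y z w : Octonion) : assoc x (y + z) w = assoc x y w + assoc x z w := by
  simp only [assoc, add_mul, mul_add]; abel

lemma assoc_ofReal_middle (x z : Octonion) (r : ℝ) : assoc x (ofReal r) z = 0 := by
  rw [assoc, sub_eq_zero]
  ext : 1 <;>
    simp only [mul_q1, mul_q2, ofReal_q1, ofReal_q2, star_zero, zero_mul, mul_zero, sub_zero,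
      add_zero, zero_add, Quaternion.star_coe, Quaternion.coe_mul_eq_smul,
      Quaternion.mul_coe_eq_smul, smul_mul_assoc, mul_smul_comm, Quaternion.star_smul]

theorem assoc_self_left (x y : Octonion) : assoc x x y = 0 := by
  rw [assoc, sub_eq_zero]
  ext <;>
    simp only [mul_q1, mul_q2, Quaternion.re_add, Quaternion.re_sub, Quaternion.re_mul,
      Quaternion.re_star, Quaternion.imI_add, Quaternion.imI_sub, Quaternion.imI_mul,
      Quaternion.imI_star, Quaternion.imJ_add, Quaternion.imJ_sub, Quaternion.imJ_mul,
      Quaternion.imJ_star, Quaternion.imK_add, Quaternion.imK_sub, Quaternion.imK_mul,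
      Quaternion.imK_star] <;>
    ring

theorem assoc_swap_left (x y z : Octonion) : assoc y x z = -assoc x y z := by
  have h := assoc_self_left (x + y) z
  rw [assoc_add_left, assoc_add_middle, assoc_add_middle, assoc_self_left, assoc_self_left,
    zero_add, add_zero] at h
  exact eq_neg_of_add_eq_zero_right h

lemma self_add_conj (x : Octonion) : x + conj x = ofReal (2 * re x) := by
  ext : 1
  · simp only [add_q1, conj_q1, ofReal_q1, re, Quaternion.self_add_star, Quaternion.coe_mul]
    rfl
  · simp

theorem assoc_conj_middle (x y z : Octonion) : assoc x (conj y) z = -assoc x y z := by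
  have h := assoc_add_middle x y (conj y) z
  rw [self_add_conj, assoc_ofReal_middle] at h
  exact eq_neg_of_add_eq_zero_right h.symm

end Octonion

open Octonion in
theorem octonion_swap_lemma (a ω : Octonion) (h : a * ω = ω * conj a)
    (b : Octonion) : a * (ω * b) = ω * (conj a * b) := by
  have key : assoc a ω b = assoc ω (conj a) b := by
    rw [assoc_conj_middle, assoc_swap_left a ω b, neg_neg]
  unfold assoc at key
  rw [h] at key
  exact sub_right_injective key
end

section
/- Two-point representation formula: let c₁, c₂ and ω, ω₁, ω₂ be octonions with ω² = ω₁² = ω₂² = -1 and ω₁ ≠ ω₂. Set f₁ = c₁ + ω₁*c₂ and f₂ = c₁ + ω₂*c₂. Then c₁ + ω*c₂ = (ω - ω₂) * ((ω₁ - ω₂)⁻¹ * f₁) - (ω - ω₁) * ((ω₁ - ω₂)⁻¹ * f₂). -/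
/-!
Left multiplication by `u⁻¹ = ‖u‖⁻² • conj u` undoes left multiplication by `u` and vice
versa (`conj u * (u * b) = ‖u‖² b = u * (conj u * b)`, a consequence of alternativity).
With `d = ω₁ - ω₂`, `x = d⁻¹ f₁`, `y = d⁻¹ f₂` this gives `x - y = d⁻¹ (d c₂) = c₂` and
`d y = f₂ = c₁ + ω₂ c₂`, and the formula then follows by distributivity alone.
-/

theorem add_mul_eq_of_sub_eq_of_mul_eq {R : Type*} [NonUnitalNonAssocRing R]
    {c₁ c₂ ω ω₁ ω₂ x y : R} (hxy : x - y = c₂) (hy : (ω₁ - ω₂) * y = c₁ + ω₂ * c₂) :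
    c₁ + ω * c₂ = (ω - ω₂) * x - (ω - ω₁) * y := by
  obtain rfl : c₁ = (ω₁ - ω₂) * y - ω₂ * c₂ := eq_sub_of_add_eq hy.symm
  subst hxy
  simp only [sub_mul, mul_sub]
  abel

namespace Octonion

@[simp] lemma smul_q1 (r : ℝ) (x : Octonion) : (r • x).q1 = r • x.q1 := rfl
@[simp] lemma smul_q2 (r : ℝ) (x : Octonion) : (r • x).q2 = r • x.q2 := rfl
noncomputable instance inst_s17 : AddCommGroup Octonion where
  add_assoc a b c := by ext <;> simp [add_assoc]
  zero_add a := by ext <;> simp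
  add_zero a := by ext <;> simp
  add_comm a b := by ext <;> simp [add_comm]
  neg_add_cancel a := by ext <;> simp
  sub_eq_add_neg a b := by ext <;> simp [sub_eq_add_neg]
  nsmul := nsmulRec
  zsmul := zsmulRec

noncomputable instance inst_s17_2 : NonUnitalNonAssocRing Octonion where
  left_distrib a b c := by ext <;> simp [star_add] <;> ring
  right_distrib a b c := by ext <;> simp <;> ring
  zero_mul a := by ext <;> simp
  mul_zero a := by ext <;> simp

noncomputable instance : Module ℝ Octonion where
  one_smul x := by ext <;> simp
  mul_smul r s x := by ext <;> simp [mul_smul]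
  smul_add r x y := by ext <;> simp
  add_smul r s x := by ext <;> simp [add_smul]
  zero_smul x := by ext <;> simp
  smul_zero r := by ext <;> simp

instance : IsScalarTower ℝ Octonion Octonion :=
  ⟨fun r x y => by ext <;> simp [smul_sub, smul_add]⟩

instance : SMulCommClass ℝ Octonion Octonion :=
  ⟨fun r x y => by ext <;> simp [smul_sub, smul_add]⟩

noncomputable def normSq (x : Octonion) : ℝ := Quaternion.normSq x.q1 + Quaternion.normSq x.q2

lemma norm_sq (x : Octonion) : norm x ^ 2 = normSq x :=
  Real.sq_sqrt (add_nonneg Quaternion.normSq_nonneg Quaternion.normSq_nonneg)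

lemma normSq_ne_zero {x : Octonion} (hx : x ≠ 0) : normSq x ≠ 0 := by
  contrapose! hx
  obtain ⟨h₁, h₂⟩ := (add_eq_zero_iff_of_nonneg Quaternion.normSq_nonneg
    Quaternion.normSq_nonneg).mp hx
  exact Octonion.ext (Quaternion.normSq_eq_zero.mp h₁) (Quaternion.normSq_eq_zero.mp h₂)

lemma conj_mul_mul (a b : Octonion) : conj a * (a * b) = normSq a • b := by
  ext <;> simp [normSq, Quaternion.normSq_def'] <;> ring

lemma mul_conj_mul (a b : Octonion) : a * (conj a * b) = normSq a • b := by
  ext <;> simp [normSq, Quaternion.normSq_def'] <;> ring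

noncomputable instance : Inv Octonion := ⟨fun x => (norm x ^ 2)⁻¹ • conj x⟩

lemma inv_def (x : Octonion) : x⁻¹ = (norm x ^ 2)⁻¹ • conj x := rfl

lemma inv_mul_cancel_left₀ {a : Octonion} (ha : a ≠ 0) (b : Octonion) : a⁻¹ * (a * b) = b := by
  rw [inv_def, smul_mul_assoc, conj_mul_mul, norm_sq, inv_smul_smul₀ (normSq_ne_zero ha)]

lemma mul_inv_cancel_left₀ {a : Octonion} (ha : a ≠ 0) (b : Octonion) : a * (a⁻¹ * b) = b := by
  rw [inv_def, smul_mul_assoc, mul_smul_comm, mul_conj_mul, norm_sq,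
    inv_smul_smul₀ (normSq_ne_zero ha)]

end Octonion

open Octonion in
theorem octonion_two_point_representation_general (c₁ c₂ ω ω₁ ω₂ f₁ f₂ : Octonion)
    (hne : ω₁ ≠ ω₂)
    (hf₁ : f₁ = c₁ + ω₁ * c₂) (hf₂ : f₂ = c₁ + ω₂ * c₂) :
    c₁ + ω * c₂ =
      (ω - ω₂) * ((((norm (ω₁ - ω₂)) ^ 2)⁻¹ • conj (ω₁ - ω₂)) * f₁) -
      (ω - ω₁) * ((((norm (ω₁ - ω₂)) ^ 2)⁻¹ • conj (ω₁ - ω₂)) * f₂) := by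
  have hd : ω₁ - ω₂ ≠ 0 := sub_ne_zero.mpr hne
  rw [← inv_def]
  apply add_mul_eq_of_sub_eq_of_mul_eq
  · rw [← mul_sub, hf₁, hf₂, add_sub_add_left_eq_sub, ← sub_mul, inv_mul_cancel_left₀ hd]
  · rw [mul_inv_cancel_left₀ hd, hf₂]

open Octonion in
theorem octonion_two_point_representation (c₁ c₂ ω ω₁ ω₂ f₁ f₂ : Octonion)
    (hω : ω * ω = -1) (h₁ : ω₁ * ω₁ = -1) (h₂ : ω₂ * ω₂ = -1) (hne : ω₁ ≠ ω₂)
    (hf₁ : f₁ = c₁ + ω₁ * c₂) (hf₂ : f₂ = c₁ + ω₂ * c₂) :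
    c₁ + ω * c₂ =
      (ω - ω₂) * ((((norm (ω₁ - ω₂)) ^ 2)⁻¹ • conj (ω₁ - ω₂)) * f₁) -
      (ω - ω₁) * ((((norm (ω₁ - ω₂)) ^ 2)⁻¹ • conj (ω₁ - ω₂)) * f₂) :=
  octonion_two_point_representation_general c₁ c₂ ω ω₁ ω₂ f₁ f₂ hne hf₁ hf₂
end
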